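/- For all integers 0 ≤ j ≤ k one has Σ_{i=j}^{k} s_{k,i} · t_{i,j} = 1 if j = k and = 0 if j < k; that is, the lower-triangular matrices (s_{k,i}) and (t_{i,j}) are mutually inverse in the other order. -/

import Mathlib

open Finset

noncomputable section

/-- The field `F = ℚ(𝔮)` of rational functions over `ℚ` in an indeterminate `𝔮`. -/
abbrev F : Type := RatFunc ℚ

/-- The indeterminate `𝔮`. -/
noncomputable def qv : F := RatFunc.X

/-- `{n} = 𝔮^n - 𝔮^{-n}` for `n : ℤ`. -/
def brc (n : ℤ) : F := qv ^ n - qv ^ (-n)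

/-- `[n] = {n}/{1}`. -/
def brk (n : ℤ) : F := brc n / brc 1

/-- `{n}! = ∏_{j=1}^n {j}`. -/
def brcFac (n : ℕ) : F := ∏ j ∈ Finset.range n, brc ((j : ℤ) + 1)

/-- `[n]! = ∏_{j=1}^n [j]`. -/
def brkFac (n : ℕ) : F := ∏ j ∈ Finset.range n, brk ((j : ℤ) + 1)

/-- `q = 𝔮²`. -/
def qq : F := qv ^ 2

/-- The q-Pochhammer symbol `(x; q)_k = ∏_{j=0}^{k-1} (1 - x q^j)`. -/
def poch (x : F) (k : ℕ) : F := ∏ j ∈ Finset.range k, (1 - x * qq ^ j)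

/-- The q-binomial coefficient `[n choose i]_q`. -/
def qbinom (n i : ℕ) : F := poch qq n / (poch qq i * poch qq (n - i))

/-- `t_{k,i} = {2k+1}! {2i+2} / ({k+i+2}! {k-i}!)` for `0 ≤ i ≤ k`. -/
def tcoef (k i : ℕ) : F :=
  brcFac (2 * k + 1) * brc (2 * (i : ℤ) + 2) / (brcFac (k + i + 2) * brcFac (k - i))

/-- `s_{i,j} = (-1)^{i+j} [i+1+j]! / ([i-j]! [2j+1]!)` for `0 ≤ j ≤ i`. -/
def scoef (i j : ℕ) : F :=
  (-1) ^ (i + j) * brkFac (i + 1 + j) / (brkFac (i - j) * brkFac (2 * j + 1))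

/-! The tail sums `Σ_{l=i}^{k} s_{k,l} t_{l,j}` have the closed form
`s_{k,i} t_{i,j} [i-j][i+j+2] / ([k-j][k+j+2])` for `j ≤ i ≤ k`, `j < k`. This follows by downward
induction on `i`: consecutive terms have ratio `-[k+i+2][k-i] / ([i+j+3][i+1-j])`, and the
inductive step reduces to `[x-y][x+y] - [z-y][z+y] = [x-z][x+z]`. At `i = j` the factor `[0]`
makes the sum vanish. -/

lemma qv_ne_zero : qv ≠ 0 := RatFunc.X_ne_zero

lemma qv_pow_ne_one {n : ℕ} (hn : n ≠ 0) : qv ^ n ≠ 1 := by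
  rw [qv, ← RatFunc.algebraMap_X, ← map_pow]
  intro h
  have := RatFunc.algebraMap_injective ℚ (h.trans (map_one _).symm)
  simpa [hn] using congrArg Polynomial.natDegree this

lemma qv_zpow_ne_one {m : ℤ} (hm : m ≠ 0) : qv ^ m ≠ 1 := by
  obtain ⟨n, rfl | rfl⟩ := Int.eq_nat_or_neg m
  · simpa using qv_pow_ne_one (n := n) (by omega)
  · rw [zpow_neg, inv_ne_one, zpow_natCast]
    exact qv_pow_ne_one (by omega)

lemma brc_eq (n : ℤ) : brc n = qv ^ (-n) * (qv ^ (2 * n) - 1) := by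
  rw [brc, mul_sub, ← zpow_add₀ qv_ne_zero, mul_one]
  ring_nf

lemma brc_ne_zero {n : ℤ} (hn : n ≠ 0) : brc n ≠ 0 := by
  rw [brc_eq]
  exact mul_ne_zero (zpow_ne_zero _ qv_ne_zero) (sub_ne_zero.2 (qv_zpow_ne_one (by omega)))

lemma brk_ne_zero {n : ℤ} (hn : n ≠ 0) : brk n ≠ 0 :=
  div_ne_zero (brc_ne_zero hn) (brc_ne_zero one_ne_zero)

lemma brk_zero : brk 0 = 0 := by simp [brk, brc]

lemma brc_sub_mul_brc_add_sub (x y z : ℤ) :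
    brc (x - y) * brc (x + y) - brc (z - y) * brc (z + y) = brc (x - z) * brc (x + z) := by
  simp only [brc, neg_sub, neg_add, zpow_add₀ qv_ne_zero, zpow_sub₀ qv_ne_zero, zpow_neg]
  have hx := zpow_ne_zero x qv_ne_zero
  have hy := zpow_ne_zero y qv_ne_zero
  have hz := zpow_ne_zero z qv_ne_zero
  generalize qv ^ x = a at hx ⊢
  generalize qv ^ y = b at hy ⊢
  generalize qv ^ z = c at hz ⊢
  field_simp
  ring

lemma brk_sub_mul_brk_add_sub (x y z : ℤ) :
    brk (x - y) * brk (x + y) - brk (z - y) * brk (z + y) = brk (x - z) * brk (x + z) := by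
  simp only [brk, div_mul_div_comm, ← sub_div, brc_sub_mul_brc_add_sub]

lemma brkFac_succ (n : ℕ) : brkFac (n + 1) = brkFac n * brk (n + 1) :=
  prod_range_succ _ n

lemma brkFac_zero : brkFac 0 = 1 := prod_range_zero _

lemma brkFac_ne_zero (n : ℕ) : brkFac n ≠ 0 :=
  prod_ne_zero_iff.2 fun _ _ => brk_ne_zero (by omega)

lemma brcFac_eq_brkFac_mul (n : ℕ) : brcFac n = brkFac n * brc 1 ^ n := by
  simp only [brcFac, brkFac, brk, prod_div_distrib, prod_const, card_range]
  rw [div_mul_cancel₀ _ (pow_ne_zero _ (brc_ne_zero one_ne_zero))]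

def stTerm (k i j : ℕ) : F :=
  (-1) ^ (k + i) * brk (2 * j + 2) * brkFac (k + 1 + i) /
    (brkFac (k - i) * brkFac (i + j + 2) * brkFac (i - j))

lemma scoef_mul_tcoef {i j : ℕ} (k : ℕ) (hji : j ≤ i) : scoef k i * tcoef i j = stTerm k i j := by
  obtain ⟨d, rfl⟩ := Nat.exists_eq_add_of_le hji
  have h1 := brc_ne_zero (one_ne_zero (α := ℤ))
  have := brkFac_ne_zero (2 * (j + d) + 1)
  have := brkFac_ne_zero (k - (j + d))
  have := brkFac_ne_zero (j + d + j + 2)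
  have := brkFac_ne_zero d
  have := brkFac_ne_zero (j + d + 1 + k)
  rw [scoef, tcoef, stTerm, Nat.add_sub_cancel_left, brcFac_eq_brkFac_mul, brcFac_eq_brkFac_mul,
    brcFac_eq_brkFac_mul, brk]
  field_simp
  ring

lemma stTerm_succ {i j k : ℕ} (hji : j ≤ i) (hik : i < k) :
    stTerm k (i + 1) j * (brk (i + j + 3) * brk (i + 1 - j)) =
      -(stTerm k i j * (brk (k + i + 2) * brk (k - i))) := by
  obtain ⟨d, rfl⟩ := Nat.exists_eq_add_of_le hji
  obtain ⟨e, rfl⟩ := Nat.exists_eq_add_of_lt hik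
  simp only [stTerm]
  rw [show j + d + e + 1 - (j + d + 1) = e by omega, show j + d + e + 1 - (j + d) = e + 1 by omega,
    show j + d + 1 - j = d + 1 by omega, Nat.add_sub_cancel_left,
    show j + d + e + 1 + 1 + (j + d + 1) = (j + d + e + 1 + 1 + (j + d)) + 1 by omega,
    show j + d + 1 + j + 2 = (j + d + j + 2) + 1 by omega]
  simp only [brkFac_succ]
  push_cast
  have h1 : brk ((d : ℤ) + 1) ≠ 0 := brk_ne_zero (by omega)
  have h2 : brk ((e : ℤ) + 1) ≠ 0 := brk_ne_zero (by omega)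
  have h3 : brk (2 * (j : ℤ) + d + 3) ≠ 0 := brk_ne_zero (by omega)
  ring_nf at h1 h2 h3 ⊢
  field_simp

lemma stTerm_self (k : ℕ) : stTerm k k k = 1 := by
  have hk : brk (2 * k + 2) ≠ 0 := brk_ne_zero (by omega)
  have := brkFac_ne_zero (k + 1 + k)
  rw [stTerm, Nat.sub_self, show k + k + 2 = k + 1 + k + 1 by omega, brkFac_succ,
    (Even.add_self k).neg_one_pow, brkFac_zero]
  push_cast
  rw [show (k : ℤ) + 1 + k + 1 = 2 * k + 2 by ring]
  field_simp

lemma sum_Icc_stTerm {i j k : ℕ} (hjk : j < k) (hji : j ≤ i) (hik : i ≤ k) :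
    ∑ l ∈ Icc i k, stTerm k l j =
      stTerm k i j * (brk (i - j) * brk (i + j + 2)) / (brk (k - j) * brk (k + j + 2)) := by
  have hD : brk (k - j) * brk (k + j + 2) ≠ 0 :=
    mul_ne_zero (brk_ne_zero (by omega)) (brk_ne_zero (by omega))
  induction hik using Nat.decreasingInduction with
  | self => rw [Icc_self, sum_singleton, mul_div_cancel_right₀ _ hD]
  | of_succ i hik ih =>
    have hsucc := stTerm_succ hji hik
    have hbrk := brk_sub_mul_brk_add_sub (k + 1) (j + 1) (i + 1)
    rw [← sum_Ioc_add_eq_sum_Icc hik.le, ← Icc_add_one_left_eq_Ioc, ih (by omega),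
      div_add' _ _ _ hD, div_left_inj' hD]
    push_cast at hbrk hsucc ⊢
    ring_nf at hbrk hsucc ⊢
    linear_combination hsucc + stTerm k i j * hbrk

/-- For `0 ≤ j ≤ k`, `Σ_{i=j}^k s_{k,i} t_{i,j}` is `1` if `j = k` and `0` if `j < k`. -/
theorem stmt3 (j k : ℕ) (hjk : j ≤ k) :
    ∑ i ∈ Finset.Icc j k, scoef k i * tcoef i j = if j = k then 1 else 0 := by
  rw [sum_congr rfl fun i hi => scoef_mul_tcoef k (mem_Icc.1 hi).1]
  split_ifs with hkj
  · rw [hkj, Icc_self, sum_singleton, stTerm_self]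
  · rw [sum_Icc_stTerm (hjk.lt_of_ne hkj) le_rfl hjk, sub_self, brk_zero, zero_mul, mul_zero,
      zero_div]
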